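/- Two elements of finite order n in the group G of formal power series under composition are conjugate in G if and only if their linear coefficients are equal (and this common value is a primitive n-th root of unity). -/

import Mathlib

open PowerSeries

/-- Composition (substitution) of formal power series: coefficient formula,
valid for `g` with zero constant term. -/
noncomputable def PS.comp {F : Type*} [CommRing F] (f g : PowerSeries F) : PowerSeries F :=
  PowerSeries.mk fun k =>
    ∑ n ∈ Finset.range (k + 1), (PowerSeries.coeff (R := F) n f) * (PowerSeries.coeff (R := F) k (g ^ n))

/-- The group `G` of series with zero constant term and nonzero linear coefficient. -/
def PS.G (F : Type*) [CommRing F] : Set (PowerSeries F) :=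
  {f | PowerSeries.constantCoeff (R := F) f = 0 ∧ PowerSeries.coeff (R := F) 1 f ≠ 0}

/-- `n`-fold compositional iterate of `f`. -/
noncomputable def PS.iter {F : Type*} [CommRing F] (f : PowerSeries F) : ℕ → PowerSeries F
  | 0 => PowerSeries.X
  | n + 1 => PS.comp f (PS.iter f n)

/-- `f` has compositional order exactly `n`. -/
def PS.HasOrder {F : Type*} [CommRing F] (f : PowerSeries F) (n : ℕ) : Prop :=
  PS.iter f n = PowerSeries.X ∧ ∀ m, 0 < m → m < n → PS.iter f m ≠ PowerSeries.X

/-!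
Series without constant term form a monoid under composition, and `coeff 1` is a monoid
homomorphism from it to `F`, so conjugate series have equal linear coefficients. Conversely, a
series `a` of finite order `n` with linear coefficient `c` is conjugate to the linear series `c X`:
the average `h = n⁻¹ ∑_{j<n} c⁻ʲ a^j` (powers under composition) satisfies `h ∘ a = c h`, and `h`
is invertible because its linear coefficient is `1`. Finally, if `c ^ m = 1` then `a^m` has linear
coefficient `1` and finite order; were `a^m = X + b X^r + O(X^(r+1))` with `b ≠ 0`, its `k`-th
power would be `X + k b X^r + O(X^(r+1))`, which in characteristic zero is `X` only for `k = 0`.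
-/

namespace PS

section CommRing

variable {R : Type*} [CommRing R]

theorem coeff_comp (f g : R⟦X⟧) (k : ℕ) :
    coeff k (comp f g) = ∑ n ∈ Finset.range (k + 1), coeff n f * coeff k (g ^ n) :=
  coeff_mk _ _

theorem coeff_pow_of_lt {g : R⟦X⟧} (hg : constantCoeff g = 0) {k n : ℕ} (h : k < n) :
    coeff k (g ^ n) = 0 :=
  X_pow_dvd_iff.1 (pow_dvd_pow_of_dvd (X_dvd_iff.2 hg) n) k h

theorem coeff_pow_self {g : R⟦X⟧} (hg : constantCoeff g = 0) (n : ℕ) :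
    coeff n (g ^ n) = coeff 1 g ^ n := by
  obtain ⟨u, rfl⟩ := X_dvd_iff.2 hg
  rw [mul_pow, coeff_X_pow_mul', if_pos le_rfl, Nat.sub_self, coeff_zero_eq_constantCoeff_apply,
    map_pow, ← coeff_zero_eq_constantCoeff_apply, ← coeff_succ_X_mul]

theorem comp_eq_subst (f : R⟦X⟧) {g : R⟦X⟧} (hg : constantCoeff g = 0) :
    comp f g = f.subst g := by
  ext k
  rw [coeff_comp, coeff_subst' (HasSubst.of_constantCoeff_zero' hg),
    finsum_eq_sum_of_support_subset _ (s := Finset.range (k + 1))]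
  · simp only [smul_eq_mul]
  · intro d hd
    rw [Finset.coe_range, Set.mem_Iio]
    by_contra hdk
    exact hd (by simp only [coeff_pow_of_lt hg (by omega : k < d), smul_zero])

@[simp]
theorem constantCoeff_comp (f g : R⟦X⟧) : constantCoeff (comp f g) = constantCoeff f := by
  simpa using coeff_comp f g 0

theorem coeff_one_comp (f g : R⟦X⟧) : coeff 1 (comp f g) = coeff 1 f * coeff 1 g := by
  simp [coeff_comp, Finset.sum_range_succ]

theorem comp_X (f : R⟦X⟧) : comp f X = f := by
  rw [comp_eq_subst f constantCoeff_X, X_subst]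

theorem X_comp {g : R⟦X⟧} (hg : constantCoeff g = 0) : comp X g = g := by
  rw [comp_eq_subst X hg, subst_X (HasSubst.of_constantCoeff_zero' hg)]

theorem comp_assoc (f : R⟦X⟧) {g h : R⟦X⟧} (hg : constantCoeff g = 0)
    (hh : constantCoeff h = 0) : comp (comp f g) h = comp f (comp g h) := by
  rw [comp_eq_subst f (g := comp g h) (by rw [constantCoeff_comp, hg]), comp_eq_subst f hg,
    comp_eq_subst g hh, comp_eq_subst _ hh,
    subst_comp_subst_apply (HasSubst.of_constantCoeff_zero' hg)
      (HasSubst.of_constantCoeff_zero' hh)]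

theorem sum_comp {ι : Type*} (s : Finset ι) (u : ι → R⟦X⟧) (g : R⟦X⟧) :
    comp (∑ j ∈ s, u j) g = ∑ j ∈ s, comp (u j) g := by
  ext k
  simp only [coeff_comp, map_sum, Finset.sum_mul]
  exact Finset.sum_comm

theorem C_mul_comp (a : R) (f g : R⟦X⟧) : comp (C a * f) g = C a * comp f g := by
  ext k
  simp only [coeff_comp, coeff_C_mul, Finset.mul_sum, mul_assoc]

variable (R) in
abbrev CompMonoid := {f : R⟦X⟧ // constantCoeff f = 0}

noncomputable instance : Monoid (CompMonoid R) where
  mul a b := ⟨comp a.1 b.1, by rw [constantCoeff_comp, a.2]⟩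
  one := ⟨X, constantCoeff_X⟩
  mul_assoc a b c := Subtype.ext (comp_assoc a.1 b.2 c.2)
  one_mul a := Subtype.ext (X_comp a.2)
  mul_one a := Subtype.ext (comp_X a.1)

namespace CompMonoid

@[simp]
theorem val_mul (a b : CompMonoid R) : (a * b).1 = comp a.1 b.1 := rfl

@[simp]
theorem val_one : (1 : CompMonoid R).1 = X := rfl

@[simp]
theorem constantCoeff_val (a : CompMonoid R) : constantCoeff a.1 = 0 := a.2
theorem iter_val (a : CompMonoid R) (m : ℕ) : iter a.1 m = (a ^ m).1 := by
  induction m with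
  | zero => rfl
  | succ m ih => rw [pow_succ', val_mul, ← ih]; rfl

theorem iter_val_eq_X_iff (a : CompMonoid R) (m : ℕ) : iter a.1 m = X ↔ a ^ m = 1 := by
  rw [iter_val, ← val_one, Subtype.ext_iff]

variable (R) in
noncomputable def coeffOne : CompMonoid R →* R where
  toFun a := coeff 1 a.1
  map_one' := coeff_one_X
  map_mul' a b := coeff_one_comp a.1 b.1

theorem isUnit_iff (a : CompMonoid R) : IsUnit a ↔ IsUnit (coeff 1 a.1) := by
  refine ⟨fun ha => ha.map (coeffOne R), fun ha => ?_⟩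
  let b : CompMonoid R := ⟨a.1.substInvOfIsUnit ha, constantCoeff_substInvOfIsUnit _ ha⟩
  refine ⟨⟨a, b, ?_, ?_⟩, rfl⟩ <;> apply Subtype.ext <;> simp only [val_mul, val_one]
  · rw [comp_eq_subst _ b.2, subst_substInvOfIsUnit_right _ a.2]
  · rw [comp_eq_subst _ a.2, subst_substInvOfIsUnit_left _ a.2]

@[simp]
theorem coeff_one_val_pow (a : CompMonoid R) (m : ℕ) : coeff 1 (a ^ m).1 = coeff 1 a.1 ^ m :=
  map_pow (coeffOne R) a m

theorem coeff_one_val_pow_eq_one {a : CompMonoid R} {n : ℕ} (ha : a ^ n = 1) :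
    coeff 1 a.1 ^ n = 1 := by
  rw [← coeff_one_val_pow, ha, val_one, coeff_one_X]

theorem val_mem_G [Nontrivial R] {a : CompMonoid R} (ha : IsUnit a) : a.1 ∈ G R :=
  ⟨a.2, (ha.map (coeffOne R)).ne_zero⟩

noncomputable def linear (c : R) : CompMonoid R := ⟨C c * X, by simp⟩

theorem linear_mul (c : R) (a : CompMonoid R) : linear c * a = ⟨C c * a.1, by simp⟩ :=
  Subtype.ext (by rw [val_mul, linear, C_mul_comp, X_comp a.2])

end CompMonoid

open CompMonoid

theorem exists_comp_conj_iff_isConj [Nontrivial R] {f g : R⟦X⟧} (hf : constantCoeff f = 0)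
    (hg : constantCoeff g = 0) :
    (∃ h ∈ G R, ∃ hinv ∈ G R, comp h hinv = X ∧ comp hinv h = X ∧ comp (comp h f) hinv = g) ↔
      IsConj (⟨f, hf⟩ : CompMonoid R) ⟨g, hg⟩ := by
  constructor
  · rintro ⟨h, ⟨h0, -⟩, hinv, ⟨hinv0, -⟩, hr, hl, hconj⟩
    let u : (CompMonoid R)ˣ := ⟨⟨h, h0⟩, ⟨hinv, hinv0⟩, Subtype.ext hr, Subtype.ext hl⟩
    have hg' : (⟨g, hg⟩ : CompMonoid R) = u * ⟨f, hf⟩ * ↑u⁻¹ := Subtype.ext hconj.symm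
    exact ⟨u, by rw [SemiconjBy, hg', Units.inv_mul_cancel_right]⟩
  · rintro ⟨u, hu⟩
    have hg' : u * ⟨f, hf⟩ * ↑u⁻¹ = (⟨g, hg⟩ : CompMonoid R) := by
      rw [hu.eq, Units.mul_inv_cancel_right]
    exact ⟨_, val_mem_G u.isUnit, _, val_mem_G u⁻¹.isUnit, congrArg Subtype.val u.mul_inv,
      congrArg Subtype.val u.inv_mul, congrArg Subtype.val hg'⟩

theorem coeff_one_eq_of_isConj {a b : CompMonoid R} (hab : IsConj a b) :
    coeff 1 a.1 = coeff 1 b.1 :=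
  isConj_iff_eq.1 ((coeffOne R).map_isConj hab)

theorem coeff_comp_of_tangent {v w : R⟦X⟧} {r j : ℕ} (hv1 : coeff 1 v = 1)
    (hv : ∀ d, 2 ≤ d → d < r → coeff d v = 0) (hw0 : constantCoeff w = 0)
    (hw1 : coeff 1 w = 1) (hj : 2 ≤ j) (hjr : j ≤ r) :
    coeff j (comp v w) = coeff j v + coeff j w := by
  rw [coeff_comp, Finset.sum_eq_add_of_mem 1 j (by simp; omega) (by simp) (by omega)]
  · rw [hv1, pow_one, one_mul, coeff_pow_self hw0, hw1, one_pow, mul_one, add_comm]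
  · intro d hd ⟨hd1, hdj⟩
    rw [Finset.mem_range] at hd
    rcases Nat.eq_zero_or_pos d with rfl | hd0
    · rw [pow_zero, coeff_one, if_neg (by omega), mul_zero]
    · rw [hv d (by omega) (by omega), zero_mul]

theorem coeff_pow_of_tangent {u : CompMonoid R} {r : ℕ} (hr : 2 ≤ r) (hu1 : coeff 1 u.1 = 1)
    (hu : ∀ d, 2 ≤ d → d < r → coeff d u.1 = 0) (m : ℕ) :
    (∀ d, 2 ≤ d → d < r → coeff d (u ^ m).1 = 0) ∧ coeff r (u ^ m).1 = m • coeff r u.1 := by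
  induction m with
  | zero =>
    refine ⟨fun d hd _ => ?_, ?_⟩ <;> simp only [pow_zero, val_one, coeff_X, zero_smul] <;>
      rw [if_neg (by omega)]
  | succ m ih =>
    have key j (hj : 2 ≤ j) (hjr : j ≤ r) :=
      coeff_comp_of_tangent hu1 hu (u ^ m).2 (by simp [hu1]) hj hjr
    rw [pow_succ', val_mul]
    refine ⟨fun d hd hdr => by rw [key d hd hdr.le, hu d hd hdr, ih.1 d hd hdr, add_zero], ?_⟩
    rw [key r hr le_rfl, ih.2, succ_nsmul']

theorem eq_one_of_isOfFinOrder_of_coeff_one_eq_one [IsAddTorsionFree R] {u : CompMonoid R}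
    (hu : IsOfFinOrder u) (hu1 : coeff 1 u.1 = 1) : u = 1 := by
  obtain ⟨n, hn, hun⟩ := isOfFinOrder_iff_pow_eq_one.1 hu
  by_contra hne
  have hex : ∃ r, coeff r u.1 ≠ coeff r X := by
    by_contra! h
    exact hne (Subtype.ext (PowerSeries.ext h))
  classical
  obtain ⟨r, hr, hlt⟩ : ∃ r, coeff r u.1 ≠ coeff r X ∧ ∀ d < r, coeff d u.1 = coeff d X :=
    ⟨Nat.find hex, Nat.find_spec hex, fun d hd => not_not.1 (Nat.find_min hex hd)⟩
  have hr2 : 2 ≤ r := by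
    by_contra h
    obtain rfl | rfl : r = 0 ∨ r = 1 := by omega
    · exact hr (by simp)
    · exact hr (by rw [hu1, coeff_one_X])
  have hcoeff := (coeff_pow_of_tangent hr2 hu1
    (fun d hd hdr => by rw [hlt d hdr, coeff_X, if_neg (by omega)]) n).2
  rw [hun, val_one, coeff_X, if_neg (by omega), eq_comm, nsmul_eq_zero_iff_right hn.ne'] at hcoeff
  exact hr (by rw [hcoeff, coeff_X, if_neg (by omega)])

end CommRing

section Field

variable {F : Type*} [Field F] [CharZero F]

open CompMonoid

theorem exists_mul_eq_linear_mul {a : CompMonoid F} {n : ℕ} (hn : n ≠ 0) (ha : a ^ n = 1) :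
    ∃ h : CompMonoid F, coeff 1 h.1 = 1 ∧ h * a = linear (coeff 1 a.1) * h := by
  have hc : coeff 1 a.1 ^ n = 1 := coeff_one_val_pow_eq_one ha
  generalize hc_def : coeff 1 a.1 = c at hc
  have hc0 : c ≠ 0 := by rintro h; simp [h, hn] at hc
  have hn' : (n : F) ≠ 0 := Nat.cast_ne_zero.2 hn
  let φ : ℕ → F⟦X⟧ := fun j => C ((n * c ^ j)⁻¹) * (a ^ j).1
  have hφa (j : ℕ) : comp (φ j) a.1 = C c * φ (j + 1) := by
    rw [C_mul_comp, ← val_mul, ← pow_succ, ← mul_assoc, ← map_mul]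
    congr 2
    rw [pow_succ]
    field_simp
  have hφn : φ n = φ 0 := by simp [φ, ha, hc]
  have hperiodic : ∑ j ∈ Finset.range n, φ (j + 1) = ∑ j ∈ Finset.range n, φ j := by
    have := Finset.sum_range_succ' φ n
    rw [Finset.sum_range_succ, hφn] at this
    exact (add_right_cancel this).symm
  refine ⟨⟨∑ j ∈ Finset.range n, φ j, by simp [φ]⟩, ?_, ?_⟩
  · have hterm (j : ℕ) : (n * c ^ j)⁻¹ * c ^ j = (n : F)⁻¹ := by field_simp
    simp only [φ, map_sum, coeff_C_mul, coeff_one_val_pow, hc_def, hterm, Finset.sum_const,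
      Finset.card_range, nsmul_eq_mul, mul_inv_cancel₀ hn']
  · rw [linear_mul]
    apply Subtype.ext
    rw [val_mul]
    simp only [sum_comp, hφa, ← Finset.mul_sum, hperiodic]

theorem isConj_linear {a : CompMonoid F} (ha : IsOfFinOrder a) :
    IsConj a (linear (coeff 1 a.1)) := by
  obtain ⟨n, hn, han⟩ := isOfFinOrder_iff_pow_eq_one.1 ha
  obtain ⟨h, h1, hconj⟩ := exists_mul_eq_linear_mul hn.ne' han
  have hunit : IsUnit h := (isUnit_iff h).2 (h1 ▸ isUnit_one)
  exact ⟨hunit.unit, hconj⟩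

theorem isConj_iff_coeff_one_eq {a b : CompMonoid F} (ha : IsOfFinOrder a)
    (hb : IsOfFinOrder b) : IsConj a b ↔ coeff 1 a.1 = coeff 1 b.1 :=
  ⟨coeff_one_eq_of_isConj, fun hab => (isConj_linear ha).trans (hab ▸ isConj_linear hb).symm⟩

end Field

end PS

theorem stmt_7 (F : Type*) [Field F] [CharZero F] (f g : PowerSeries F)
    (hf : f ∈ PS.G F) (hg : g ∈ PS.G F) (n : ℕ) (hn : 0 < n)
    (hordf : PS.HasOrder f n) (hordg : PS.HasOrder g n) :
    ((∃ h ∈ PS.G F, ∃ hinv ∈ PS.G F,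
        PS.comp h hinv = PowerSeries.X ∧ PS.comp hinv h = PowerSeries.X ∧
        PS.comp (PS.comp h f) hinv = g) ↔
      PowerSeries.coeff (R := F) 1 f = PowerSeries.coeff (R := F) 1 g) ∧
    (PowerSeries.coeff (R := F) 1 f) ^ n = 1 ∧
    (∀ m, 0 < m → m < n → (PowerSeries.coeff (R := F) 1 f) ^ m ≠ 1) := by
  let a : PS.CompMonoid F := ⟨f, hf.1⟩
  let b : PS.CompMonoid F := ⟨g, hg.1⟩
  have ha : a ^ n = 1 := (PS.CompMonoid.iter_val_eq_X_iff a n).1 hordf.1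
  have hb : b ^ n = 1 := (PS.CompMonoid.iter_val_eq_X_iff b n).1 hordg.1
  have ha' : IsOfFinOrder a := isOfFinOrder_iff_pow_eq_one.2 ⟨n, hn, ha⟩
  have hb' : IsOfFinOrder b := isOfFinOrder_iff_pow_eq_one.2 ⟨n, hn, hb⟩
  refine ⟨(PS.exists_comp_conj_iff_isConj hf.1 hg.1).trans (PS.isConj_iff_coeff_one_eq ha' hb'),
    ?_, fun m hm hmn hfm => hordf.2 m hm hmn ?_⟩
  · exact PS.CompMonoid.coeff_one_val_pow_eq_one ha
  · refine (PS.CompMonoid.iter_val_eq_X_iff a m).2 ?_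
    exact PS.eq_one_of_isOfFinOrder_of_coeff_one_eq_one ha'.pow (by simpa [a] using hfm)
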